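/- arXiv:2508.08206 — 4 statements merged into one kernel-verified Lean document; each statement's English description precedes it below -/
import Mathlib

section
/- Let n and K_B be natural numbers with n ≥ 2·K_B + 1, and let x₁ ≤ x₂ ≤ ⋯ ≤ xₙ be real numbers in [0,1]. Let H ⊆ {1,…,n} be a set of (honest) indices with |{1,…,n} \ H| ≤ K_B and |H| ≥ 2·K_B + 1, and let T = {K_B+1, …, n−K_B} be the index set obtained by removing the K_B smallest and K_B largest values. Then the trimmed mean deviates from the honest mean by at most 2·K_B/|H|: |(1/|T|)·∑_{i∈T} xᵢ − (1/|H|)·∑_{i∈H} xᵢ| ≤ 2·K_B/|H|. -/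
open Finset

/-- Deviation of the Byzantine-resilient trimmed mean from the honest mean:
for sorted values `x₁ ≤ ⋯ ≤ xₙ` in `[0,1]`, honest index set `H` with at most
`K_B` non-honest indices and `|H| ≥ 2K_B + 1`, and `T` the index set obtained
by removing the `K_B` smallest and `K_B` largest values, the trimmed mean is
within `2·K_B/|H|` of the honest mean. -/
theorem trimmed_mean_deviation
    (n K_B : ℕ) (hn : 2 * K_B + 1 ≤ n)
    (x : Fin n → ℝ) (hmono : Monotone x)
    (hrange : ∀ i, x i ∈ Set.Icc (0:ℝ) 1)
    (H : Finset (Fin n))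
    (hByz : (Finset.univ \ H).card ≤ K_B)
    (hH : 2 * K_B + 1 ≤ H.card)
    (T : Finset (Fin n))
    (hT : T = Finset.univ.filter (fun i : Fin n => K_B ≤ (i : ℕ) ∧ (i : ℕ) < n - K_B)) :
    |(∑ i ∈ T, x i) / (T.card : ℝ) - (∑ i ∈ H, x i) / (H.card : ℝ)|
      ≤ 2 * (K_B : ℝ) / (H.card : ℝ) := by
  have hmemT : ∀ i : Fin n, i ∈ T ↔ (K_B ≤ (i : ℕ) ∧ (i : ℕ) < n - K_B) := by
    intro i; simp [hT]
  have hTne : T.Nonempty := ⟨⟨K_B, by omega⟩, by rw [hmemT]; constructor <;> simp <;> omega⟩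
  have ht0 : (0:ℝ) < (T.card : ℝ) := by exact_mod_cast hTne.card_pos
  have hHcard : 0 < H.card := by omega
  have hh0 : (0:ℝ) < (H.card : ℝ) := by exact_mod_cast hHcard
  set μ : ℝ := (∑ i ∈ T, x i) / (T.card : ℝ) with hμ
  have hμ0 : 0 ≤ μ := by
    apply div_nonneg _ ht0.le
    exact Finset.sum_nonneg fun i _ => (hrange i).1
  have hμ1 : μ ≤ 1 := by
    rw [hμ, div_le_one ht0]
    calc ∑ i ∈ T, x i ≤ ∑ i ∈ T, 1 := Finset.sum_le_sum fun i _ => (hrange i).2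
    _ = T.card := by simp
  have hlow : ∀ i : Fin n, (i:ℕ) < K_B → x i ≤ μ := by
    intro i hi
    rw [hμ, le_div_iff₀ ht0]
    have h1 : T.card • x i ≤ ∑ j ∈ T, x j := by
      apply Finset.card_nsmul_le_sum
      intro j hj
      rw [hmemT] at hj
      exact hmono (Fin.le_def.mpr (by omega))
    simpa [nsmul_eq_mul, mul_comm] using h1
  have hhigh : ∀ i : Fin n, n - K_B ≤ (i:ℕ) → μ ≤ x i := by
    intro i hi
    rw [hμ, div_le_iff₀ ht0]
    have h1 : ∑ j ∈ T, x j ≤ T.card • x i := by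
      apply Finset.sum_le_card_nsmul
      intro j hj
      rw [hmemT] at hj
      exact hmono (Fin.le_def.mpr (by omega))
    simpa [nsmul_eq_mul, mul_comm] using h1
  set L : Finset (Fin n) := (H \ T).filter (fun i => (i:ℕ) < K_B) with hL
  set U : Finset (Fin n) := (H \ T).filter (fun i => ¬ (i:ℕ) < K_B) with hU
  have hLcard : L.card ≤ K_B := by
    calc L.card = (L.image (fun i : Fin n => (i:ℕ))).card :=
      (Finset.card_image_of_injective _ Fin.val_injective).symm
    _ ≤ (Finset.range K_B).card := Finset.card_le_card (by
        intro m hm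
        simp only [Finset.mem_image] at hm
        obtain ⟨i, hi, rfl⟩ := hm
        rw [hL, Finset.mem_filter] at hi
        simpa using hi.2)
    _ = K_B := Finset.card_range _
  have hUmem : ∀ i ∈ U, n - K_B ≤ (i:ℕ) := by
    intro i hi
    rw [hU, Finset.mem_filter, Finset.mem_sdiff] at hi
    have hiT := hi.1.2
    rw [hmemT] at hiT
    have := hi.2
    omega
  have hUcard : U.card ≤ K_B := by
    calc U.card = (U.image (fun i : Fin n => (i:ℕ))).card :=
      (Finset.card_image_of_injective _ Fin.val_injective).symm
    _ ≤ (Finset.Ico (n - K_B) n).card := Finset.card_le_card (by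
        intro m hm
        simp only [Finset.mem_image] at hm
        obtain ⟨i, hi, rfl⟩ := hm
        rw [Finset.mem_Ico]
        exact ⟨hUmem i hi, i.isLt⟩)
    _ = n - (n - K_B) := Nat.card_Ico _ _
    _ ≤ K_B := by omega
  have hTHcard : (T \ H).card ≤ K_B :=
    le_trans (Finset.card_le_card
      (Finset.sdiff_subset_sdiff (Finset.subset_univ T) le_rfl)) hByz
  have hsumT : ∑ i ∈ T, (x i - μ) = 0 := by
    rw [Finset.sum_sub_distrib, Finset.sum_const, nsmul_eq_mul, hμ]
    field_simp
    ring
  have hsplit1 : ∑ i ∈ H, (x i - μ)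
      = ∑ i ∈ H ∩ T, (x i - μ) + ∑ i ∈ H \ T, (x i - μ) :=
    (Finset.sum_inter_add_sum_sdiff H T _).symm
  have hsplit2 : ∑ i ∈ H \ T, (x i - μ) = ∑ i ∈ L, (x i - μ) + ∑ i ∈ U, (x i - μ) :=
    (Finset.sum_filter_add_sum_filter_not (H \ T) _ _).symm
  have hsplit3 : ∑ i ∈ H ∩ T, (x i - μ) = - ∑ i ∈ T \ H, (x i - μ) := by
    have h := Finset.sum_inter_add_sum_sdiff T H (fun i => x i - μ)
    rw [Finset.inter_comm] at h
    linarith [hsumT]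
  have hA1 : ∑ i ∈ T \ H, (x i - μ) ≤ K_B := by
    calc ∑ i ∈ T \ H, (x i - μ) ≤ ∑ _i ∈ T \ H, (1:ℝ) :=
      Finset.sum_le_sum fun i _ => by have := (hrange i).2; linarith
    _ = ((T \ H).card : ℝ) := by simp
    _ ≤ K_B := by exact_mod_cast hTHcard
  have hA2 : -(K_B:ℝ) ≤ ∑ i ∈ T \ H, (x i - μ) := by
    have hc : ((T \ H).card : ℝ) ≤ K_B := by exact_mod_cast hTHcard
    calc -(K_B:ℝ) ≤ -((T \ H).card : ℝ) := by linarith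
    _ = ∑ _i ∈ T \ H, (-1:ℝ) := by simp
    _ ≤ _ := Finset.sum_le_sum fun i _ => by have := (hrange i).1; linarith
  have hB1 : ∑ i ∈ L, (x i - μ) ≤ 0 := by
    apply Finset.sum_nonpos
    intro i hi
    rw [hL, Finset.mem_filter] at hi
    linarith [hlow i hi.2]
  have hB2 : -(K_B:ℝ) ≤ ∑ i ∈ L, (x i - μ) := by
    have hc : (L.card : ℝ) ≤ K_B := by exact_mod_cast hLcard
    calc -(K_B:ℝ) ≤ -(L.card : ℝ) := by linarith
    _ = ∑ _i ∈ L, (-1:ℝ) := by simp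
    _ ≤ _ := Finset.sum_le_sum fun i _ => by have := (hrange i).1; linarith
  have hC1 : 0 ≤ ∑ i ∈ U, (x i - μ) := by
    apply Finset.sum_nonneg
    intro i hi
    linarith [hhigh i (hUmem i hi)]
  have hC2 : ∑ i ∈ U, (x i - μ) ≤ K_B := by
    have hc : (U.card : ℝ) ≤ K_B := by exact_mod_cast hUcard
    calc ∑ i ∈ U, (x i - μ) ≤ ∑ _i ∈ U, (1:ℝ) :=
      Finset.sum_le_sum fun i _ => by have := (hrange i).2; linarith
    _ = (U.card : ℝ) := by simp
    _ ≤ K_B := hc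
  have hmain : |∑ i ∈ H, (x i - μ)| ≤ 2 * (K_B:ℝ) := by
    rw [hsplit1, hsplit2, hsplit3, abs_le]
    constructor <;> linarith
  have hrw : (∑ i ∈ T, x i) / (T.card : ℝ) - (∑ i ∈ H, x i) / (H.card : ℝ)
      = -((∑ i ∈ H, (x i - μ)) / (H.card : ℝ)) := by
    rw [Finset.sum_sub_distrib, Finset.sum_const, nsmul_eq_mul, sub_div,
      mul_div_cancel_left₀ _ hh0.ne', neg_sub]
  rw [hrw, abs_neg, abs_div, abs_of_pos hh0]
  gcongr
end

section
/- Let h ∈ ℂ^M be a channel vector, w₁,…,w_K ∈ ℂ^M precoding vectors, σ > 0 a noise level, and fix k ∈ {1,…,K}. Then for every equalizer c ∈ ℂ, the mean-squared error satisfies |c|²·( ∑_{j=1}^K |⟨h, wⱼ⟩|² + σ² ) − 2·Re( c·⟨h, w_k⟩ ) + 1 ≥ σ² / ( ‖h‖²·‖w_k‖² + σ² ), where ⟨h, w⟩ = h^H w denotes the complex inner product. -/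
open Finset
open scoped ComplexInnerProductSpace

/-- Per-user MSE lower bound: for any scalar equalizer `c`, the MSE of user `k`
is at least `σ² / (‖h‖²‖w_k‖² + σ²)`. -/
theorem mse_lower_bound
    {M K : ℕ} (h : EuclideanSpace ℂ (Fin M)) (w : Fin K → EuclideanSpace ℂ (Fin M))
    (σ : ℝ) (hσ : 0 < σ) (k : Fin K) :
    ∀ c : ℂ,
      σ ^ 2 / (‖h‖ ^ 2 * ‖w k‖ ^ 2 + σ ^ 2)
        ≤ ‖c‖ ^ 2 * (∑ j, ‖⟪h, w j⟫‖ ^ 2 + σ ^ 2) - 2 * (c * ⟪h, w k⟫).re + 1 := by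
  intro c
  set a : ℂ := ⟪h, w k⟫ with ha
  set t : ℝ := ‖c‖ with ht
  set A : ℝ := ‖a‖ with hA
  set S : ℝ := ∑ j, ‖⟪h, w j⟫‖ ^ 2 + σ ^ 2 with hSdef
  have hAB : A ≤ ‖h‖ * ‖w k‖ := norm_inner_le_norm h (w k)
  have hAS : A ^ 2 + σ ^ 2 ≤ S := by
    have : A ^ 2 ≤ ∑ j, ‖⟪h, w j⟫‖ ^ 2 :=
      Finset.single_le_sum (f := fun j => ‖⟪h, w j⟫‖ ^ 2)
        (fun j _ => by positivity) (Finset.mem_univ k)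
    linarith
  have hrc : (c * a).re ≤ t * A := by
    calc (c * a).re ≤ ‖c * a‖ := Complex.re_le_norm _
      _ = t * A := norm_mul c a
  have ht0 : 0 ≤ t := norm_nonneg _
  have hA0 : 0 ≤ A := norm_nonneg _
  have hB0 : 0 ≤ ‖h‖ * ‖w k‖ := by positivity
  have hSpos : 0 < S := by nlinarith
  have hden : 0 < ‖h‖ ^ 2 * ‖w k‖ ^ 2 + σ ^ 2 := by positivity
  rw [div_le_iff₀ hden]
  have hB2 : A ^ 2 ≤ ‖h‖ ^ 2 * ‖w k‖ ^ 2 := by nlinarith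
  nlinarith [sq_nonneg (t * S - A), mul_pos hSpos hden, sq_nonneg (t * A - 1),
    mul_nonneg (mul_nonneg ht0 ht0) (sub_nonneg.mpr hB2),
    mul_nonneg (sub_nonneg.mpr hB2) (sq_nonneg σ),
    mul_nonneg (sub_nonneg.mpr hrc) hSpos.le]
end

section
/- Let h₁,…,h_K ∈ ℂ^M be channel vectors, σ₁,…,σ_K > 0 noise levels, and P_max > 0 a power budget. Then for all precoding vectors w₁,…,w_K ∈ ℂ^M with ∑_{k=1}^K ‖w_k‖² ≤ P_max and all equalizers c₁,…,c_K ∈ ℂ, the sum mean-squared error satisfies ∑_{k=1}^K [ |c_k|²( ∑_{j=1}^K |⟨h_k, wⱼ⟩|² + σ_k² ) − 2 Re( c_k ⟨h_k, w_k⟩ ) + 1 ] ≥ inf { ∑_{k=1}^K σ_k² / ( ‖h_k‖²·p_k + σ_k² ) : p₁,…,p_K ≥ 0, ∑_{k=1}^K p_k ≤ P_max }. -/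
open Finset
open scoped ComplexInnerProductSpace

lemma mse_key (x r A G B s : ℝ) (hx : 0 ≤ x) (hr : r ^ 2 ≤ x * G)
    (hG : 0 ≤ G) (hGB : G ≤ B) (hs : 0 < s) (hA : G + s ≤ A) :
    s / (B + s) ≤ x * A - 2 * r + 1 := by
  have hB : 0 ≤ B := le_trans hG hGB
  have hA0 : 0 < A := lt_of_lt_of_le (by positivity) hA
  have hQ : 0 ≤ x * A ^ 2 - 2 * r * A + G := by
    rcases eq_or_lt_of_le hx with h0 | h0
    · have hr0 : r = 0 := by nlinarith [sq_nonneg r]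
      rw [hr0, ← h0]; ring_nf; exact hG
    · nlinarith [sq_nonneg (x * A - r)]
  rw [div_le_iff₀ (by positivity)]
  nlinarith [mul_nonneg hQ (by positivity : (0:ℝ) ≤ B + s),
    mul_nonneg (sub_nonneg.mpr hGB) hs.le,
    mul_nonneg (sub_nonneg.mpr hA) hB, hA0]

/-- Lower bound on the optimal cost: under the power budget
`∑ k ‖w k‖² ≤ P_max`, the sum MSE of all users is lower bounded by the optimal
value of the relaxed per-user power-allocation problem. -/
theorem sum_mse_power_allocation_lower_bound
    {M K : ℕ} (h : Fin K → EuclideanSpace ℂ (Fin M))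
    (σ : Fin K → ℝ) (hσ : ∀ k, 0 < σ k) (Pmax : ℝ) (hP : 0 < Pmax) :
    ∀ (w : Fin K → EuclideanSpace ℂ (Fin M)), (∑ k, ‖w k‖ ^ 2 ≤ Pmax) →
    ∀ (c : Fin K → ℂ),
      sInf {v : ℝ | ∃ p : Fin K → ℝ, (∀ k, 0 ≤ p k) ∧ (∑ k, p k ≤ Pmax) ∧
              v = ∑ k, (σ k) ^ 2 / (‖h k‖ ^ 2 * p k + (σ k) ^ 2)}
        ≤ ∑ k, (‖c k‖ ^ 2 * (∑ j, ‖⟪h k, w j⟫‖ ^ 2 + (σ k) ^ 2)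
                  - 2 * (c k * ⟪h k, w k⟫).re + 1) := by
  intro w hw c
  have hbdd : BddBelow {v : ℝ | ∃ p : Fin K → ℝ, (∀ k, 0 ≤ p k) ∧ (∑ k, p k ≤ Pmax) ∧
      v = ∑ k, (σ k) ^ 2 / (‖h k‖ ^ 2 * p k + (σ k) ^ 2)} := by
    refine ⟨0, ?_⟩
    rintro v ⟨p, hp, _, rfl⟩
    apply Finset.sum_nonneg
    intro k _
    have := hσ k
    have := hp k
    positivity
  have hmem : (∑ k, (σ k) ^ 2 / (‖h k‖ ^ 2 * ‖w k‖ ^ 2 + (σ k) ^ 2)) ∈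
      {v : ℝ | ∃ p : Fin K → ℝ, (∀ k, 0 ≤ p k) ∧ (∑ k, p k ≤ Pmax) ∧
      v = ∑ k, (σ k) ^ 2 / (‖h k‖ ^ 2 * p k + (σ k) ^ 2)} :=
    ⟨fun k => ‖w k‖ ^ 2, fun k => by positivity, hw, rfl⟩
  refine le_trans (csInf_le hbdd hmem) (Finset.sum_le_sum fun k _ => ?_)
  have hr : ((c k * ⟪h k, w k⟫).re) ^ 2 ≤ ‖c k‖ ^ 2 * ‖⟪h k, w k⟫‖ ^ 2 := by
    have h1 : |(c k * ⟪h k, w k⟫).re| ≤ ‖c k * ⟪h k, w k⟫‖ := Complex.abs_re_le_norm _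
    have h2 : ‖c k * ⟪h k, w k⟫‖ = ‖c k‖ * ‖⟪h k, w k⟫‖ := norm_mul _ _
    nlinarith [abs_nonneg ((c k * ⟪h k, w k⟫).re), sq_abs ((c k * ⟪h k, w k⟫).re)]
  have hGB : ‖⟪h k, w k⟫‖ ^ 2 ≤ ‖h k‖ ^ 2 * ‖w k‖ ^ 2 := by
    have := norm_inner_le_norm (𝕜 := ℂ) (h k) (w k)
    nlinarith [norm_nonneg (⟪h k, w k⟫), norm_nonneg (h k), norm_nonneg (w k)]
  have hA : ‖⟪h k, w k⟫‖ ^ 2 + (σ k) ^ 2 ≤ ∑ j, ‖⟪h k, w j⟫‖ ^ 2 + (σ k) ^ 2 := by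
    have : ‖⟪h k, w k⟫‖ ^ 2 ≤ ∑ j, ‖⟪h k, w j⟫‖ ^ 2 :=
      Finset.single_le_sum (f := fun j => ‖⟪h k, w j⟫‖ ^ 2)
        (fun j _ => by positivity) (Finset.mem_univ k)
    linarith
  exact mse_key _ _ _ _ _ _ (by positivity) hr (by positivity) hGB
    (by have := hσ k; positivity) hA
end

section
/- Let A ∈ ℂ^{M×M} be Hermitian positive definite, h ∈ ℂ^M a (column) vector, and B ∈ ℂ^{M×K} a matrix. For λ ≥ 0 the matrix A + λ·h·h^H is positive definite (hence invertible), and the row vector h^H·(A + λ·h·h^H)⁻¹·B tends to zero as λ → ∞; i.e., in the limit of an infinitely weighted leakage term, the regularized solution W(λ) = (A + λ h h^H)⁻¹ B achieves strict null-steering with respect to h: h^H·W(λ) → 0. -/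
open Matrix Filter Topology
open scoped ComplexOrder

private lemma aux_vecMul_vecMulVec {M : ℕ} (x u v : Fin M → ℂ) :
    x ᵥ* Matrix.vecMulVec u v = (x ⬝ᵥ u) • v := by
  ext j; simp [vecMul, vecMulVec, dotProduct, Finset.sum_mul, mul_assoc]

private lemma aux_vecMulVec_mulVec {M : ℕ} (x u v : Fin M → ℂ) :
    Matrix.vecMulVec u v *ᵥ x = (v ⬝ᵥ x) • u := by
  ext i; simp [mulVec, vecMulVec, dotProduct, Finset.mul_sum, mul_assoc, mul_comm, mul_left_comm]

private lemma aux_vecMul_smul {M K : ℕ} (x : Fin M → ℂ) (c : ℂ)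
    (N : Matrix (Fin M) (Fin K) ℂ) :
    x ᵥ* (c • N) = c • (x ᵥ* N) := by
  ext j; simp [vecMul, dotProduct, Finset.mul_sum, mul_assoc, mul_comm, mul_left_comm]

/-- Null-steering limit of the ridge–nulling precoder: for Hermitian positive
definite `A`, any `λ ≥ 0` makes `A + λ h hᴴ` positive definite (hence
invertible), and the leakage `hᴴ (A + λ h hᴴ)⁻¹ B` tends to zero as `λ → ∞`. -/
theorem null_steering_limit
    {M K : ℕ} (A : Matrix (Fin M) (Fin M) ℂ) (hA : A.PosDef)
    (h : Fin M → ℂ) (B : Matrix (Fin M) (Fin K) ℂ) :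
    (∀ lam : ℝ, 0 ≤ lam →
        (A + (lam : ℂ) • Matrix.vecMulVec h (star h)).PosDef) ∧
    Tendsto (fun lam : ℝ =>
        (star h) ᵥ* ((A + (lam : ℂ) • Matrix.vecMulVec h (star h))⁻¹ * B))
      atTop (𝓝 0) := by
  have hpos : ∀ lam : ℝ, 0 ≤ lam →
      (A + (lam : ℂ) • Matrix.vecMulVec h (star h)).PosDef := by
    intro lam hlam
    refine hA.add_posSemidef (PosSemidef.of_dotProduct_mulVec_nonneg ?_ ?_)
    · ext i j
      simp [conjTranspose_apply, vecMulVec_apply, mul_comm,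
        Complex.conj_ofReal, mul_left_comm, mul_assoc]
    · intro x
      have key : star x ⬝ᵥ (((lam : ℂ) • Matrix.vecMulVec h (star h)) *ᵥ x)
          = (lam : ℂ) * (star (star x ⬝ᵥ h) * (star x ⬝ᵥ h)) := by
        rw [smul_mulVec, dotProduct_smul, aux_vecMulVec_mulVec,
          dotProduct_smul, star_dotProduct]
        simp [smul_eq_mul, star_star, mul_comm]
      rw [key]
      exact mul_nonneg (by exact_mod_cast Complex.zero_le_real.mpr hlam)
        (star_mul_self_nonneg _)
  refine ⟨hpos, ?_⟩
  rcases eq_or_ne h 0 with h0 | h0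
  · simp only [h0, star_zero, Matrix.zero_vecMul]
    exact (tendsto_const_nhds :
      Tendsto (fun _ : ℝ => (0 : Fin K → ℂ)) atTop (𝓝 0))
  · set qc : ℂ := star h ⬝ᵥ (A⁻¹ *ᵥ h) with hqc_def
    have hq : 0 < qc := hA.inv.dotProduct_mulVec_pos h0
    obtain ⟨hqre, hqim⟩ := Complex.lt_def.mp hq
    simp only [Complex.zero_re, Complex.zero_im] at hqre hqim
    set q : ℝ := qc.re with hq_def
    have hqc : qc = (q : ℂ) := Complex.ext rfl (by simp [hqim.symm])
    set V : Fin K → ℂ := star h ᵥ* (A⁻¹ * B) with hV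
    have hfun : ∀ lam : ℝ, 0 ≤ lam →
        (star h) ᵥ* ((A + (lam : ℂ) • Matrix.vecMulVec h (star h))⁻¹ * B)
          = (((1 + lam * q)⁻¹ : ℝ) : ℂ) • V := by
      intro lam hlam
      set S := A + (lam : ℂ) • Matrix.vecMulVec h (star h) with hS_def
      have hS : S.PosDef := hpos lam hlam
      have hSdet : IsUnit S.det := (Matrix.isUnit_iff_isUnit_det S).1 hS.isUnit
      have hAdet : IsUnit A.det := (Matrix.isUnit_iff_isUnit_det A).1 hA.isUnit
      have hdenomR : (0 : ℝ) < 1 + lam * q := by positivity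
      have hdenom : (1 + (lam : ℂ) * qc) ≠ 0 := by
        rw [hqc]
        exact_mod_cast hdenomR.ne'
      have key : star h ᵥ* S⁻¹ = (1 + (lam : ℂ) * qc)⁻¹ • (star h ᵥ* A⁻¹) := by
        have hcancel : ∀ x y : Fin M → ℂ, x ᵥ* S = y ᵥ* S → x = y := by
          intro x y hxy
          have := congrArg (· ᵥ* S⁻¹) hxy
          simpa [vecMul_vecMul, Matrix.mul_nonsing_inv S hSdet] using this
        apply hcancel
        have lhs : (star h ᵥ* S⁻¹) ᵥ* S = star h := by
          rw [vecMul_vecMul, Matrix.nonsing_inv_mul S hSdet, vecMul_one]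
        have rhs1 : (star h ᵥ* A⁻¹) ᵥ* S = (1 + (lam : ℂ) * qc) • star h := by
          rw [vecMul_vecMul, hS_def, Matrix.mul_add, Matrix.mul_smul,
            vecMul_add, Matrix.nonsing_inv_mul A hAdet, vecMul_one,
            aux_vecMul_smul, ← vecMul_vecMul, aux_vecMul_vecMulVec]
          have : (star h ᵥ* A⁻¹) ⬝ᵥ h = qc := by
            rw [hqc_def, dotProduct_mulVec]
          rw [this, add_smul, one_smul, smul_smul]
        rw [lhs, Matrix.smul_vecMul, rhs1, smul_smul,
          inv_mul_cancel₀ hdenom, one_smul]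
      rw [← vecMul_vecMul, key, Matrix.smul_vecMul, vecMul_vecMul, ← hV]
      congr 1
      rw [hqc]
      push_cast
      rfl
    have hcoef : Tendsto (fun lam : ℝ => (((1 + lam * q)⁻¹ : ℝ) : ℂ))
        atTop (𝓝 0) := by
      have h1 : Tendsto (fun lam : ℝ => 1 + lam * q) atTop atTop :=
        tendsto_atTop_add_const_left _ 1
          (Tendsto.atTop_mul_const hqre tendsto_id)
      have h2 : Tendsto (fun lam : ℝ => (1 + lam * q)⁻¹) atTop (𝓝 0) :=
        tendsto_inv_atTop_zero.comp h1
      have := (Complex.continuous_ofReal.tendsto 0).comp h2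
      simpa [Function.comp_def] using this
    have hlim : Tendsto (fun lam : ℝ => (((1 + lam * q)⁻¹ : ℝ) : ℂ) • V)
        atTop (𝓝 0) := by
      simpa using hcoef.smul_const V
    refine hlim.congr' ?_
    filter_upwards [eventually_ge_atTop 0] with lam hlam
    exact (hfun lam hlam).symm
end
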